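/- arXiv:2010.13633 — 6 statements merged into one kernel-verified Lean document; each statement's English description precedes it below -/
import Mathlib

section
/- In every red-blue edge-coloring of the complete graph K_6, if there exist a red triangle and a blue triangle that are vertex-disjoint, then there exists a 'bowtie', i.e., a red triangle and a blue triangle sharing exactly one vertex. -/
/-- `T` is a triangle of color `col` under the edge-coloring `c`. -/
def IsTri {V : Type*} [DecidableEq V] (c : V → V → Bool) (col : Bool) (T : Finset V) : Prop :=
  T.card = 3 ∧ ∀ x ∈ T, ∀ y ∈ T, x ≠ y → c x y = col

set_option maxHeartbeats 1000000 in
set_option synthInstance.maxHeartbeats 400000 in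
set_option synthInstance.maxSize 400 in
lemma key_bool : ∀ eax eay eaz ebx eby ebz edx edy edz : Bool,
    (eax = false ∧ eay = false) ∨
    (eax = false ∧ eaz = false) ∨
    (eay = false ∧ eaz = false) ∨
    (ebx = false ∧ eby = false) ∨
    (ebx = false ∧ ebz = false) ∨
    (eby = false ∧ ebz = false) ∨
    (edx = false ∧ edy = false) ∨
    (edx = false ∧ edz = false) ∨
    (edy = false ∧ edz = false) ∨
    (eax = true ∧ ebx = true) ∨
    (eax = true ∧ edx = true) ∨
    (ebx = true ∧ edx = true) ∨
    (eay = true ∧ eby = true) ∨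
    (eay = true ∧ edy = true) ∨
    (eby = true ∧ edy = true) ∨
    (eaz = true ∧ ebz = true) ∨
    (eaz = true ∧ edz = true) ∨
    (ebz = true ∧ edz = true) := by decide

lemma mk_bowtie (c : Fin 6 → Fin 6 → Bool) (hsym : ∀ x y, c x y = c y x)
    (col : Bool) (r u v : Fin 6) (huv : u ≠ v) (hru : r ≠ u) (hrv : r ≠ v)
    (h1 : c r u = col) (h2 : c r v = col) (h3 : c u v = col) :
    IsTri c col {r, u, v} := by
  constructor
  · rw [Finset.card_insert_of_notMem (by simp [hru, hrv]),
      Finset.card_insert_of_notMem (by simp [huv]), Finset.card_singleton]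
  · intro x hx y hy hxy
    simp only [Finset.mem_insert, Finset.mem_singleton] at hx hy
    rcases hx with rfl | rfl | rfl <;> rcases hy with rfl | rfl | rfl <;>
      first
        | exact absurd rfl hxy
        | assumption
        | (rw [hsym]; assumption)

lemma inter_single (T : Finset (Fin 6)) (r u v : Fin 6) (hr : r ∈ T) (hu : u ∉ T) (hv : v ∉ T) :
    (T ∩ {r, u, v}).card = 1 := by
  have hT : T ∩ {r, u, v} = {r} := by
    ext t
    simp only [Finset.mem_inter, Finset.mem_insert, Finset.mem_singleton]
    constructor
    · rintro ⟨ht, rfl | rfl | rfl⟩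
      · rfl
      · exact absurd ht hu
      · exact absurd ht hv
    · rintro rfl; exact ⟨hr, Or.inl rfl⟩
  rw [hT, Finset.card_singleton]

/-- In every red-blue edge-coloring of `K₆`, if there are a vertex-disjoint red triangle and
blue triangle, then there is a bowtie: a red triangle and a blue triangle sharing exactly
one vertex. -/
theorem stmt_0 (c : Fin 6 → Fin 6 → Bool) (hsym : ∀ x y, c x y = c y x)
    (Tr Tb : Finset (Fin 6)) (hTr : IsTri c true Tr) (hTb : IsTri c false Tb)
    (hdisj : Disjoint Tr Tb) :
    ∃ Sr Sb : Finset (Fin 6), IsTri c true Sr ∧ IsTri c false Sb ∧ (Sr ∩ Sb).card = 1 := by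
  obtain ⟨a, b, d, hab, had, hbd, hTr'⟩ := Finset.card_eq_three.mp hTr.1
  obtain ⟨x, y, z, hxy, hxz, hyz, hTb'⟩ := Finset.card_eq_three.mp hTb.1
  subst hTr' hTb'
  have hna : a ∉ ({x,y,z} : Finset (Fin 6)) := Finset.disjoint_left.mp hdisj (by simp)
  have hnb : b ∉ ({x,y,z} : Finset (Fin 6)) := Finset.disjoint_left.mp hdisj (by simp)
  have hnd : d ∉ ({x,y,z} : Finset (Fin 6)) := Finset.disjoint_left.mp hdisj (by simp)
  have hnx : x ∉ ({a,b,d} : Finset (Fin 6)) := Finset.disjoint_right.mp hdisj (by simp)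
  have hny : y ∉ ({a,b,d} : Finset (Fin 6)) := Finset.disjoint_right.mp hdisj (by simp)
  have hnz : z ∉ ({a,b,d} : Finset (Fin 6)) := Finset.disjoint_right.mp hdisj (by simp)
  have hax : a ≠ x := by rintro rfl; simp at hna
  have hay : a ≠ y := by rintro rfl; simp at hna
  have haz : a ≠ z := by rintro rfl; simp at hna
  have hbx : b ≠ x := by rintro rfl; simp at hnb
  have hby : b ≠ y := by rintro rfl; simp at hnb
  have hbz : b ≠ z := by rintro rfl; simp at hnb
  have hdx : d ≠ x := by rintro rfl; simp at hnd
  have hdy : d ≠ y := by rintro rfl; simp at hnd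
  have hdz : d ≠ z := by rintro rfl; simp at hnd
  rcases key_bool (c a x) (c a y) (c a z) (c b x) (c b y) (c b z) (c d x) (c d y) (c d z) with
    h | h | h | h | h | h | h | h | h | h | h | h | h | h | h | h | h | h
  · obtain ⟨h1, h2⟩ := h
    exact ⟨{a,b,d}, {a,x,y}, hTr, mk_bowtie c hsym false a x y hxy hax hay h1 h2
      (hTb.2 x (by simp) y (by simp) hxy), inter_single _ a x y (by simp) hnx hny⟩
  · obtain ⟨h1, h2⟩ := h
    exact ⟨{a,b,d}, {a,x,z}, hTr, mk_bowtie c hsym false a x z hxz hax haz h1 h2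
      (hTb.2 x (by simp) z (by simp) hxz), inter_single _ a x z (by simp) hnx hnz⟩
  · obtain ⟨h1, h2⟩ := h
    exact ⟨{a,b,d}, {a,y,z}, hTr, mk_bowtie c hsym false a y z hyz hay haz h1 h2
      (hTb.2 y (by simp) z (by simp) hyz), inter_single _ a y z (by simp) hny hnz⟩
  · obtain ⟨h1, h2⟩ := h
    exact ⟨{a,b,d}, {b,x,y}, hTr, mk_bowtie c hsym false b x y hxy hbx hby h1 h2
      (hTb.2 x (by simp) y (by simp) hxy), inter_single _ b x y (by simp) hnx hny⟩
  · obtain ⟨h1, h2⟩ := h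
    exact ⟨{a,b,d}, {b,x,z}, hTr, mk_bowtie c hsym false b x z hxz hbx hbz h1 h2
      (hTb.2 x (by simp) z (by simp) hxz), inter_single _ b x z (by simp) hnx hnz⟩
  · obtain ⟨h1, h2⟩ := h
    exact ⟨{a,b,d}, {b,y,z}, hTr, mk_bowtie c hsym false b y z hyz hby hbz h1 h2
      (hTb.2 y (by simp) z (by simp) hyz), inter_single _ b y z (by simp) hny hnz⟩
  · obtain ⟨h1, h2⟩ := h
    exact ⟨{a,b,d}, {d,x,y}, hTr, mk_bowtie c hsym false d x y hxy hdx hdy h1 h2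
      (hTb.2 x (by simp) y (by simp) hxy), inter_single _ d x y (by simp) hnx hny⟩
  · obtain ⟨h1, h2⟩ := h
    exact ⟨{a,b,d}, {d,x,z}, hTr, mk_bowtie c hsym false d x z hxz hdx hdz h1 h2
      (hTb.2 x (by simp) z (by simp) hxz), inter_single _ d x z (by simp) hnx hnz⟩
  · obtain ⟨h1, h2⟩ := h
    exact ⟨{a,b,d}, {d,y,z}, hTr, mk_bowtie c hsym false d y z hyz hdy hdz h1 h2
      (hTb.2 y (by simp) z (by simp) hyz), inter_single _ d y z (by simp) hny hnz⟩
  · obtain ⟨h1, h2⟩ := h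
    refine ⟨{x,a,b}, {x,y,z}, mk_bowtie c hsym true x a b hab (Ne.symm hax) (Ne.symm hbx)
      (by rw [hsym]; exact h1) (by rw [hsym]; exact h2) (hTr.2 a (by simp) b (by simp) hab), hTb, ?_⟩
    rw [Finset.inter_comm]
    exact inter_single _ x a b (by simp) hna hnb
  · obtain ⟨h1, h2⟩ := h
    refine ⟨{x,a,d}, {x,y,z}, mk_bowtie c hsym true x a d had (Ne.symm hax) (Ne.symm hdx)
      (by rw [hsym]; exact h1) (by rw [hsym]; exact h2) (hTr.2 a (by simp) d (by simp) had), hTb, ?_⟩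
    rw [Finset.inter_comm]
    exact inter_single _ x a d (by simp) hna hnd
  · obtain ⟨h1, h2⟩ := h
    refine ⟨{x,b,d}, {x,y,z}, mk_bowtie c hsym true x b d hbd (Ne.symm hbx) (Ne.symm hdx)
      (by rw [hsym]; exact h1) (by rw [hsym]; exact h2) (hTr.2 b (by simp) d (by simp) hbd), hTb, ?_⟩
    rw [Finset.inter_comm]
    exact inter_single _ x b d (by simp) hnb hnd
  · obtain ⟨h1, h2⟩ := h
    refine ⟨{y,a,b}, {x,y,z}, mk_bowtie c hsym true y a b hab (Ne.symm hay) (Ne.symm hby)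
      (by rw [hsym]; exact h1) (by rw [hsym]; exact h2) (hTr.2 a (by simp) b (by simp) hab), hTb, ?_⟩
    rw [Finset.inter_comm]
    exact inter_single _ y a b (by simp) hna hnb
  · obtain ⟨h1, h2⟩ := h
    refine ⟨{y,a,d}, {x,y,z}, mk_bowtie c hsym true y a d had (Ne.symm hay) (Ne.symm hdy)
      (by rw [hsym]; exact h1) (by rw [hsym]; exact h2) (hTr.2 a (by simp) d (by simp) had), hTb, ?_⟩
    rw [Finset.inter_comm]
    exact inter_single _ y a d (by simp) hna hnd
  · obtain ⟨h1, h2⟩ := h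
    refine ⟨{y,b,d}, {x,y,z}, mk_bowtie c hsym true y b d hbd (Ne.symm hby) (Ne.symm hdy)
      (by rw [hsym]; exact h1) (by rw [hsym]; exact h2) (hTr.2 b (by simp) d (by simp) hbd), hTb, ?_⟩
    rw [Finset.inter_comm]
    exact inter_single _ y b d (by simp) hnb hnd
  · obtain ⟨h1, h2⟩ := h
    refine ⟨{z,a,b}, {x,y,z}, mk_bowtie c hsym true z a b hab (Ne.symm haz) (Ne.symm hbz)
      (by rw [hsym]; exact h1) (by rw [hsym]; exact h2) (hTr.2 a (by simp) b (by simp) hab), hTb, ?_⟩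
    rw [Finset.inter_comm]
    exact inter_single _ z a b (by simp) hna hnb
  · obtain ⟨h1, h2⟩ := h
    refine ⟨{z,a,d}, {x,y,z}, mk_bowtie c hsym true z a d had (Ne.symm haz) (Ne.symm hdz)
      (by rw [hsym]; exact h1) (by rw [hsym]; exact h2) (hTr.2 a (by simp) d (by simp) had), hTb, ?_⟩
    rw [Finset.inter_comm]
    exact inter_single _ z a d (by simp) hna hnd
  · obtain ⟨h1, h2⟩ := h
    refine ⟨{z,b,d}, {x,y,z}, mk_bowtie c hsym true z b d hbd (Ne.symm hbz) (Ne.symm hdz)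
      (by rw [hsym]; exact h1) (by rw [hsym]; exact h2) (hTr.2 b (by simp) d (by simp) hbd), hTb, ?_⟩
    rw [Finset.inter_comm]
    exact inter_single _ z b d (by simp) hnb hnd
end

section
/- Let a red-blue edge-coloring of K_n be given. Let F be a largest family of pairwise vertex-disjoint triangles all of the same color (the maximum over both colors), and let F' be a largest family of pairwise vertex-disjoint bowties. Then 3|F| + 2|F'| ≥ n - 5. -/
/-- `W` is a bowtie: the union of a red triangle and a blue triangle sharing exactly
one vertex. -/
def IsBowtie {V : Type*} [DecidableEq V] (c : V → V → Bool) (W : Finset V) : Prop :=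
  ∃ Tr Tb : Finset V, IsTri c true Tr ∧ IsTri c false Tb ∧ (Tr ∩ Tb).card = 1 ∧ W = Tr ∪ Tb

/-- A family of pairwise vertex-disjoint triangles, all of the same color `col`. -/
def TriFamily {V : Type*} [DecidableEq V] (c : V → V → Bool) (col : Bool)
    (F : Finset (Finset V)) : Prop :=
  (∀ T ∈ F, IsTri c col T) ∧ (F : Set (Finset V)).Pairwise Disjoint

/-- A family of pairwise vertex-disjoint bowties. -/
def BowtieFamily {V : Type*} [DecidableEq V] (c : V → V → Bool)
    (F : Finset (Finset V)) : Prop :=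
  (∀ W ∈ F, IsBowtie c W) ∧ (F : Set (Finset V)).Pairwise Disjoint

/-!
Let `A` be the vertex set of the largest bowtie family `F'`. Its complement `R` contains no bowtie,
and a red and a blue triangle always contain a bowtie in their union: if they are disjoint, some
vertex of one of them sends two edges of the other triangle's color into the other triangle. Hence
all monochromatic triangles inside `R` have one color `col₀`, and `R(3,3) = 6` lets us greedily
pack disjoint `col₀`-triangles into `R` until at most five vertices are left. Together with one
`col₀`-triangle from each bowtie of `F'` this is a monochromatic family of `|G| + |F'| ≤ |F|`
triangles, so `n ≤ 5|F'| + 3|G| + 5 ≤ 3|F| + 2|F'| + 5`.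
-/

open Finset

lemma Finset.notMem_of_forall_disjoint {V : Type*} {F : Finset (Finset V)} {W : Finset V}
    (hW : W.Nonempty) (h : ∀ X ∈ F, Disjoint W X) : W ∉ F :=
  fun hmem => hW.ne_empty (disjoint_self.mp (h W hmem))

section

variable {V : Type*} [DecidableEq V] {c : V → V → Bool}

lemma isTri_triple (hsym : ∀ x y, c x y = c y x) {col : Bool} {x y z : V}
    (hxy : x ≠ y) (hxz : x ≠ z) (hyz : y ≠ z)
    (exy : c x y = col) (exz : c x z = col) (eyz : c y z = col) :
    IsTri c col {x, y, z} := by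
  refine ⟨card_eq_three.mpr ⟨x, y, z, hxy, hxz, hyz, rfl⟩, ?_⟩
  simp only [mem_insert, mem_singleton]
  rintro a (rfl | rfl | rfl) b (rfl | rfl | rfl) hab <;>
    first | exact absurd rfl hab | assumption | (rw [hsym]; assumption)

lemma IsTri.nonempty {col : Bool} {T : Finset V} (hT : IsTri c col T) : T.Nonempty :=
  card_pos.mp (by rw [hT.1]; norm_num)

lemma IsTri.card_inter_le_one {col : Bool} {T T' : Finset V} (hT : IsTri c col T)
    (hT' : IsTri c (!col) T') : (T ∩ T').card ≤ 1 := by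
  by_contra! h
  obtain ⟨u, hu, w, hw, huw⟩ := one_lt_card.mp h
  rw [mem_inter] at hu hw
  have := (hT.2 u hu.1 w hw.1 huw).symm.trans (hT'.2 u hu.2 w hw.2 huw)
  cases col <;> simp at this

lemma isBowtie_union {col : Bool} {T T' : Finset V} (hT : IsTri c col T)
    (hT' : IsTri c (!col) T') (h : (T ∩ T').card = 1) : IsBowtie c (T ∪ T') := by
  cases col
  · exact ⟨T', T, hT', hT, by rwa [inter_comm], union_comm _ _⟩
  · exact ⟨T, T', hT, hT', h, rfl⟩

lemma IsBowtie.card_eq_five {W : Finset V} (h : IsBowtie c W) : W.card = 5 := by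
  obtain ⟨Tr, Tb, hr, hb, hi, rfl⟩ := h
  have := card_union_add_card_inter Tr Tb
  have := hr.1
  have := hb.1
  omega

lemma IsBowtie.exists_isTri_subset {W : Finset V} (h : IsBowtie c W) (col : Bool) :
    ∃ T ⊆ W, IsTri c col T := by
  obtain ⟨Tr, Tb, hr, hb, -, rfl⟩ := h
  cases col
  · exact ⟨Tb, subset_union_right, hb⟩
  · exact ⟨Tr, subset_union_left, hr⟩

/-- Ramsey's theorem `R(3,3) = 6`. -/
lemma exists_isTri_subset_of_six_le_card (hsym : ∀ x y, c x y = c y x) {S : Finset V}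
    (hS : 6 ≤ S.card) : ∃ (col : Bool) (T : Finset V), T ⊆ S ∧ IsTri c col T := by
  obtain ⟨v, hv⟩ : S.Nonempty := card_pos.mp (by omega)
  have hN : 5 ≤ (S.erase v).card := by rw [card_erase_of_mem hv]; omega
  obtain ⟨col, hcol⟩ : ∃ col, 2 < ((S.erase v).filter (c v · = col)).card := by
    have := card_filter_add_card_filter_not (s := S.erase v) (c v · = true)
    simp only [Bool.not_eq_true] at this
    by_cases h : 2 < ((S.erase v).filter (c v · = true)).card
    · exact ⟨true, h⟩
    · exact ⟨false, by omega⟩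
  obtain ⟨x, hx, y, hy, z, hz, hxy, hxz, hyz⟩ := two_lt_card.mp hcol
  simp only [mem_filter, mem_erase] at hx hy hz
  have hsub : ∀ {a b d : V}, a ∈ S → b ∈ S → d ∈ S → ({a, b, d} : Finset V) ⊆ S := by
    intro a b d ha hb hd
    simp only [insert_subset_iff, singleton_subset_iff]
    exact ⟨ha, hb, hd⟩
  -- An edge of color `col` among `x, y, z` closes a triangle with `v`; otherwise `x, y, z` is one.
  by_cases exy : c x y = col
  · exact ⟨col, _, hsub hv hx.1.2 hy.1.2,
      isTri_triple hsym hx.1.1.symm hy.1.1.symm hxy hx.2 hy.2 exy⟩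
  by_cases exz : c x z = col
  · exact ⟨col, _, hsub hv hx.1.2 hz.1.2,
      isTri_triple hsym hx.1.1.symm hz.1.1.symm hxz hx.2 hz.2 exz⟩
  by_cases eyz : c y z = col
  · exact ⟨col, _, hsub hv hy.1.2 hz.1.2,
      isTri_triple hsym hy.1.1.symm hz.1.1.symm hyz hy.2 hz.2 eyz⟩
  exact ⟨!col, _, hsub hx.1.2 hy.1.2 hz.1.2, isTri_triple hsym hxy hxz hyz
    (Bool.eq_not_iff.mpr exy) (Bool.eq_not_iff.mpr exz) (Bool.eq_not_iff.mpr eyz)⟩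

set_option maxRecDepth 10000 in
/-- In a 2-colored `3 × 3` grid, some row has two entries `!col` or some column has two entries
`col`: otherwise each row has at least two `col` entries, six in all, so some column has two. -/
lemma fin_three_grid_cherry (col : Bool) : ∀ M : Fin 3 → Fin 3 → Bool,
    (∃ i j k, j ≠ k ∧ M i j = !col ∧ M i k = !col) ∨
    (∃ j i k, i ≠ k ∧ M i j = col ∧ M k j = col) := by
  cases col <;> decide

lemma isBowtie_union_triple (hsym : ∀ x y, c x y = c y x) {col : Bool} {T : Finset V}
    (hT : IsTri c col T) {v p q : V} (hv : v ∈ T) (hp : p ∉ T) (hq : q ∉ T) (hpq : p ≠ q)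
    (evp : c v p = !col) (evq : c v q = !col) (epq : c p q = !col) :
    IsBowtie c (T ∪ {v, p, q}) := by
  have hvp : v ≠ p := by rintro rfl; exact hp hv
  have hvq : v ≠ q := by rintro rfl; exact hq hv
  refine isBowtie_union hT (isTri_triple hsym hvp hvq hpq evp evq epq) ?_
  rw [card_eq_one]
  refine ⟨v, ext fun w => ?_⟩
  simp only [mem_inter, mem_insert, mem_singleton]
  constructor
  · rintro ⟨hw, rfl | rfl | rfl⟩
    exacts [rfl, absurd hw hp, absurd hw hq]
  · rintro rfl
    exact ⟨hv, Or.inl rfl⟩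

lemma exists_isBowtie_subset_union_of_disjoint (hsym : ∀ x y, c x y = c y x) {col : Bool}
    {T T' : Finset V} (hT : IsTri c col T) (hT' : IsTri c (!col) T') (hdisj : Disjoint T T') :
    ∃ W ⊆ T ∪ T', IsBowtie c W := by
  set e := (equivFinOfCardEq hT.1).symm
  set e' := (equivFinOfCardEq hT'.1).symm
  have hsub : ∀ {S : Finset V} {v p q : V}, S ⊆ T ∪ T' → v ∈ S → p ∈ T ∪ T' → q ∈ T ∪ T' →
      S ∪ {v, p, q} ⊆ T ∪ T' := by
    intro S v p q hS hv hp hq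
    simp only [union_subset_iff, insert_subset_iff, singleton_subset_iff]
    exact ⟨hS, hS hv, hp, hq⟩
  rcases fin_three_grid_cherry col (fun i j => c (e i) (e' j)) with
    ⟨i, j, k, hjk, e1, e2⟩ | ⟨j, i, k, hik, e1, e2⟩
  · have hpq : (e' j : V) ≠ e' k := fun h => hjk (e'.injective (Subtype.ext h))
    exact ⟨_, hsub subset_union_left (e i).2 (mem_union_right _ (e' j).2)
      (mem_union_right _ (e' k).2),
      isBowtie_union_triple hsym hT (e i).2 (disjoint_right.mp hdisj (e' j).2)
        (disjoint_right.mp hdisj (e' k).2) hpq e1 e2 (hT'.2 _ (e' j).2 _ (e' k).2 hpq)⟩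
  · have hpq : (e i : V) ≠ e k := fun h => hik (e.injective (Subtype.ext h))
    refine ⟨_, hsub subset_union_right (e' j).2 (mem_union_left _ (e i).2)
      (mem_union_left _ (e k).2),
      isBowtie_union_triple hsym hT' (e' j).2 (disjoint_left.mp hdisj (e i).2)
        (disjoint_left.mp hdisj (e k).2) hpq ?_ ?_ ?_⟩
    · rw [Bool.not_not, hsym]; exact e1
    · rw [Bool.not_not, hsym]; exact e2
    · rw [Bool.not_not]; exact hT.2 _ (e i).2 _ (e k).2 hpq

lemma exists_isBowtie_subset_union (hsym : ∀ x y, c x y = c y x) {col : Bool}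
    {T T' : Finset V} (hT : IsTri c col T) (hT' : IsTri c (!col) T') :
    ∃ W ⊆ T ∪ T', IsBowtie c W := by
  rcases (hT.card_inter_le_one hT').lt_or_eq with h | h
  · refine exists_isBowtie_subset_union_of_disjoint hsym hT hT' ?_
    rw [disjoint_iff_inter_eq_empty, ← card_eq_zero]
    omega
  · exact ⟨_, subset_rfl, isBowtie_union hT hT' h⟩

lemma exists_color_of_forall_not_isBowtie (hsym : ∀ x y, c x y = c y x) {R : Finset V}
    (hR : ∀ W ⊆ R, ¬ IsBowtie c W) :
    ∃ col₀, ∀ col T, T ⊆ R → IsTri c col T → col = col₀ := by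
  by_contra! h
  obtain ⟨col, T, hTR, hT, -⟩ := h true
  obtain ⟨col', T', hT'R, hT', hne⟩ := h col
  rw [← Bool.eq_not_iff] at hne
  subst hne
  obtain ⟨W, hW, hWb⟩ := exists_isBowtie_subset_union hsym hT hT'
  exact hR W (hW.trans (union_subset hTR hT'R)) hWb

lemma pairwise_disjoint_insert {F : Finset (Finset V)} {W : Finset V}
    (hF : (F : Set (Finset V)).Pairwise Disjoint) (h : ∀ X ∈ F, Disjoint W X) :
    ((insert W F : Finset (Finset V)) : Set (Finset V)).Pairwise Disjoint := by
  rw [coe_insert, Set.pairwise_insert_of_symm]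
  exact ⟨hF, fun X hX _ => h X hX⟩

lemma TriFamily.insert {col : Bool} {G : Finset (Finset V)} {T : Finset V}
    (hG : TriFamily c col G) (hT : IsTri c col T) (h : ∀ X ∈ G, Disjoint T X) :
    TriFamily c col (insert T G) :=
  ⟨(forall_mem_insert _ _ _).mpr ⟨hT, hG.1⟩, pairwise_disjoint_insert hG.2 h⟩

lemma TriFamily.union {col : Bool} {G H : Finset (Finset V)} (hG : TriFamily c col G)
    (hH : TriFamily c col H) (h : ∀ T ∈ G, ∀ T' ∈ H, Disjoint T T') :
    TriFamily c col (G ∪ H) := by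
  refine ⟨fun T hT => (mem_union.mp hT).elim (hG.1 T) (hH.1 T), ?_⟩
  rw [coe_union, Set.pairwise_union_of_symm]
  exact ⟨hG.2, hH.2, fun T hT T' hT' _ => h T hT T' hT'⟩

lemma TriFamily.card_union {col : Bool} {G H : Finset (Finset V)} (hG : TriFamily c col G)
    (h : ∀ T ∈ G, ∀ T' ∈ H, Disjoint T T') : (G ∪ H).card = G.card + H.card :=
  card_union_of_disjoint <| disjoint_left.mpr fun T hTG hTH =>
    (hG.1 T hTG).nonempty.ne_empty (disjoint_self.mp (h T hTG T hTH))

/-- Greedy packing: while six vertices remain, `R(3,3) = 6` supplies a further `col₀`-triangle. -/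
lemma exists_triFamily_of_forall_isTri_color (hsym : ∀ x y, c x y = c y x) {col₀ : Bool}
    (R : Finset V) (hR : ∀ col T, T ⊆ R → IsTri c col T → col = col₀) :
    ∃ G, TriFamily c col₀ G ∧ (∀ T ∈ G, T ⊆ R) ∧ R.card ≤ 3 * G.card + 5 := by
  induction R using Finset.strongInduction with
  | H R ih =>
  by_cases hR5 : R.card ≤ 5
  · exact ⟨∅, ⟨by simp, by simp⟩, by simp, by omega⟩
  obtain ⟨col, T, hTR, hT⟩ := exists_isTri_subset_of_six_le_card hsym (by omega : 6 ≤ R.card)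
  obtain rfl := hR col T hTR hT
  obtain ⟨G, hG, hGR, hcard⟩ := ih (R \ T) (sdiff_ssubset hTR hT.nonempty)
    fun col' T' hT' => hR col' T' (hT'.trans sdiff_subset)
  have hdisj : ∀ X ∈ G, Disjoint T X :=
    fun X hX => disjoint_of_subset_right (hGR X hX) disjoint_sdiff
  refine ⟨insert T G, hG.insert hT hdisj,
    (forall_mem_insert _ _ _).mpr ⟨hTR, fun X hX => (hGR X hX).trans sdiff_subset⟩, ?_⟩
  rw [card_insert_of_notMem (notMem_of_forall_disjoint hT.nonempty hdisj)]
  have := card_sdiff_of_subset hTR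
  rw [hT.1] at this
  omega

lemma BowtieFamily.card_biUnion {F' : Finset (Finset V)} (hF' : BowtieFamily c F') :
    (F'.biUnion id).card = 5 * F'.card := by
  rw [Finset.card_biUnion (t := id) fun _ hX _ hY hXY => hF'.2 hX hY hXY,
    sum_congr rfl fun W hW => show (id W).card = 5 from (hF'.1 W hW).card_eq_five,
    sum_const, smul_eq_mul, mul_comm]

lemma BowtieFamily.not_isBowtie_of_forall_disjoint {F' : Finset (Finset V)}
    (hF' : BowtieFamily c F') (hmax : ∀ G, BowtieFamily c G → G.card ≤ F'.card)
    {W : Finset V} (hW : ∀ X ∈ F', Disjoint W X) : ¬ IsBowtie c W := by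
  intro hWb
  have := hmax _ ⟨(forall_mem_insert _ _ _).mpr ⟨hWb, hF'.1⟩, pairwise_disjoint_insert hF'.2 hW⟩
  rw [card_insert_of_notMem (notMem_of_forall_disjoint
    (card_pos.mp (by rw [hWb.card_eq_five]; norm_num)) hW)] at this
  omega

lemma BowtieFamily.exists_triFamily {F' : Finset (Finset V)} (hF' : BowtieFamily c F')
    (col : Bool) : ∃ H, TriFamily c col H ∧ H.card = F'.card ∧ ∀ T ∈ H, ∃ W ∈ F', T ⊆ W := by
  choose! φ hφsub hφ using fun W hW => (hF'.1 W hW).exists_isTri_subset col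
  have hdisj : ∀ W₁ ∈ F', ∀ W₂ ∈ F', W₁ ≠ W₂ → Disjoint (φ W₁) (φ W₂) :=
    fun W₁ h₁ W₂ h₂ hne => disjoint_of_subset_left (hφsub W₁ h₁)
      (disjoint_of_subset_right (hφsub W₂ h₂) (hF'.2 h₁ h₂ hne))
  have hinj : Set.InjOn φ F' := by
    intro W₁ h₁ W₂ h₂ heq
    by_contra hne
    have := hdisj W₁ h₁ W₂ h₂ hne
    rw [heq, disjoint_self] at this
    exact (hφ W₂ h₂).nonempty.ne_empty this
  refine ⟨F'.image φ, ⟨?_, ?_⟩, card_image_of_injOn hinj, ?_⟩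
  · simpa only [forall_mem_image] using hφ
  · simp only [coe_image]
    rintro _ ⟨W₁, h₁, rfl⟩ _ ⟨W₂, h₂, rfl⟩ hne
    exact hdisj W₁ h₁ W₂ h₂ fun h => hne (h ▸ rfl)
  · simp only [forall_mem_image]
    exact fun W hW => ⟨W, hW, hφsub W hW⟩

end

theorem stmt_1_general (n : ℕ) (c : Fin n → Fin n → Bool) (hsym : ∀ x y, c x y = c y x)
    (F F' : Finset (Finset (Fin n)))
    (hFmax : ∀ (col' : Bool) (G : Finset (Finset (Fin n))), TriFamily c col' G → G.card ≤ F.card)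
    (hF' : BowtieFamily c F')
    (hF'max : ∀ G : Finset (Finset (Fin n)), BowtieFamily c G → G.card ≤ F'.card) :
    (n : ℤ) - 5 ≤ 3 * F.card + 2 * F'.card := by
  set A := F'.biUnion id
  have hnoBowtie : ∀ W ⊆ Aᶜ, ¬ IsBowtie c W := fun W hW =>
    hF'.not_isBowtie_of_forall_disjoint hF'max
      ((disjoint_biUnion_right _ _ _).mp (subset_compl_iff_disjoint_right.mp hW))
  obtain ⟨col₀, hcol₀⟩ := exists_color_of_forall_not_isBowtie hsym hnoBowtie
  obtain ⟨G, hG, hGA, hGcard⟩ := exists_triFamily_of_forall_isTri_color hsym Aᶜ hcol₀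
  obtain ⟨H, hH, hHcard, hHF'⟩ := hF'.exists_triFamily col₀
  have hGH : ∀ T ∈ G, ∀ T' ∈ H, Disjoint T T' := by
    intro T hT T' hT'
    obtain ⟨W, hW, hT'W⟩ := hHF' T' hT'
    exact disjoint_of_subset_left (hGA T hT) (disjoint_of_subset_right
      (hT'W.trans (subset_biUnion_of_mem id hW)) disjoint_compl_left)
  have hF := hFmax col₀ _ (hG.union hH hGH)
  rw [hG.card_union hGH] at hF
  have hA : A.card = 5 * F'.card := hF'.card_biUnion
  have hAc : Aᶜ.card = n - A.card := by rw [card_compl, Fintype.card_fin]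
  have hAn : A.card ≤ n := (card_le_univ A).trans_eq (Fintype.card_fin n)
  omega

/-- If `F` is a largest monochromatic family of disjoint triangles (over both colors) and
`F'` is a largest family of disjoint bowties, then `3|F| + 2|F'| ≥ n - 5`. -/
theorem stmt_1 (n : ℕ) (c : Fin n → Fin n → Bool) (hsym : ∀ x y, c x y = c y x)
    (col : Bool) (F F' : Finset (Finset (Fin n)))
    (hF : TriFamily c col F)
    (hFmax : ∀ (col' : Bool) (G : Finset (Finset (Fin n))), TriFamily c col' G → G.card ≤ F.card)
    (hF' : BowtieFamily c F')
    (hF'max : ∀ G : Finset (Finset (Fin n)), BowtieFamily c G → G.card ≤ F'.card) :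
    (n : ℤ) - 5 ≤ 3 * F.card + 2 * F'.card :=
  stmt_1_general n c hsym F F' hFmax hF' hF'max
end

section
/- In every red-blue edge-coloring of K_n, there is a monochromatic family of pairwise vertex-disjoint triangles covering at least (3/5)(n - 5) vertices, i.e., of size at least (n-5)/5. -/
lemma bool_neq {u v : Bool} (h : ¬ u = v) : u = !v := by
  cases u <;> cases v <;> simp_all

variable {V : Type*} [DecidableEq V] {c : V → V → Bool}

lemma isTri_mk (hsym : ∀ x y, c x y = c y x) {x y z : V} {col : Bool}
    (hxy : x ≠ y) (hxz : x ≠ z) (hyz : y ≠ z)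
    (h1 : c x y = col) (h2 : c x z = col) (h3 : c y z = col) :
    IsTri c col ({x, y, z} : Finset V) := by
  constructor
  · exact Finset.card_eq_three.mpr ⟨x, y, z, hxy, hxz, hyz, rfl⟩
  · intro a ha b hb hab
    simp only [Finset.mem_insert, Finset.mem_singleton] at ha hb
    rcases ha with rfl | rfl | rfl <;> rcases hb with rfl | rfl | rfl <;>
      first
        | exact absurd rfl hab
        | assumption
        | (rw [hsym]; assumption)

lemma sub3 {x y z : V} {s : Finset V} (hx : x ∈ s) (hy : y ∈ s) (hz : z ∈ s) :
    ({x, y, z} : Finset V) ⊆ s :=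
  Finset.insert_subset_iff.mpr ⟨hx, Finset.insert_subset_iff.mpr
    ⟨hy, Finset.singleton_subset_iff.mpr hz⟩⟩

/-- R(3,3) ≤ 6 -/
lemma ramsey33 (hsym : ∀ x y, c x y = c y x) {s : Finset V} (h6 : 6 ≤ s.card) :
    ∃ col T, T ⊆ s ∧ IsTri c col T := by
  obtain ⟨v, hv⟩ : s.Nonempty := Finset.card_pos.mp (by omega)
  have hcard' : 5 ≤ (s.erase v).card := by
    rw [Finset.card_erase_of_mem hv]; omega
  have hsplit := Finset.card_filter_add_card_filter_not
    (s := s.erase v) (p := fun y => c v y = true)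
  obtain ⟨b, t, ht, hb1, hb2⟩ : ∃ (b : Bool) (t : Finset V), 3 ≤ t.card ∧
      t ⊆ s.erase v ∧ ∀ y ∈ t, c v y = b := by
    by_cases h : 3 ≤ ((s.erase v).filter (fun y => c v y = true)).card
    · exact ⟨true, _, h, Finset.filter_subset _ _,
        fun y hy => (Finset.mem_filter.mp hy).2⟩
    · refine ⟨false, (s.erase v).filter (fun y => ¬ (c v y = true)), by omega,
        Finset.filter_subset _ _, fun y hy => ?_⟩
      have := (Finset.mem_filter.mp hy).2
      simpa using this
  obtain ⟨t3, ht3, ht3c⟩ := Finset.exists_subset_card_eq ht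
  obtain ⟨x, y, z, hxy, hxz, hyz, rfl⟩ := Finset.card_eq_three.mp ht3c
  have hx : x ∈ t := ht3 (by simp)
  have hy : y ∈ t := ht3 (by simp)
  have hz : z ∈ t := ht3 (by simp)
  have hts : ∀ a ∈ t, a ∈ s ∧ a ≠ v := fun a ha => by
    have := hb1 ha; rw [Finset.mem_erase] at this; exact ⟨this.2, this.1⟩
  have hvs : ∀ a, a ∈ t → v ≠ a := fun a ha => fun h => ((hts a ha).2 h.symm)
  by_cases exy : c x y = b
  · exact ⟨b, {v, x, y}, sub3 hv (hts x hx).1 (hts y hy).1,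
      isTri_mk hsym (hvs x hx) (hvs y hy) hxy (hb2 x hx) (hb2 y hy) exy⟩
  · by_cases exz : c x z = b
    · exact ⟨b, {v, x, z}, sub3 hv (hts x hx).1 (hts z hz).1,
        isTri_mk hsym (hvs x hx) (hvs z hz) hxz (hb2 x hx) (hb2 z hz) exz⟩
    · by_cases eyz : c y z = b
      · exact ⟨b, {v, y, z}, sub3 hv (hts y hy).1 (hts z hz).1,
          isTri_mk hsym (hvs y hy) (hvs z hz) hyz (hb2 y hy) (hb2 z hz) eyz⟩
      · exact ⟨!b, {x, y, z}, fun a ha => (hts a (ht3 ha)).1,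
          isTri_mk hsym hxy hxz hyz (bool_neq exy) (bool_neq exz) (bool_neq eyz)⟩

lemma greedy (hsym : ∀ x y, c x y = c y x) (col : Bool) :
    ∀ (k : ℕ) (s : Finset V), s.card ≤ k →
    (∀ T ⊆ s, ¬ IsTri c (!col) T) →
    ∃ F : Finset (Finset V),
      (∀ T ∈ F, IsTri c col T ∧ T ⊆ s) ∧ (F : Set (Finset V)).Pairwise Disjoint ∧
      (s.card : ℤ) - 5 ≤ 3 * F.card := by
  intro k
  induction k with
  | zero =>
    intro s hs _
    exact ⟨∅, by simp, by simp, by simp; omega⟩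
  | succ k ih =>
    intro s hs hno
    by_cases h5 : s.card ≤ 5
    · exact ⟨∅, by simp, by simp, by simp; omega⟩
    · obtain ⟨col', T, hTs, hT⟩ := ramsey33 hsym (s := s) (by omega)
      have hcol : col' = col := by
        by_contra h
        exact hno T hTs (by rwa [← bool_neq h])
      subst hcol
      have hT3 : T.card = 3 := hT.1
      have hsd : (s \ T).card = s.card - 3 := by
        rw [Finset.card_sdiff_of_subset hTs, hT3]
      obtain ⟨F, hF1, hF2, hF3⟩ := ih (s \ T) (by omega)
        (fun U hU => hno U (hU.trans Finset.sdiff_subset))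
      have hTF : T ∉ F := by
        intro h
        have := (hF1 T h).2
        have : T = ∅ := Finset.subset_empty.mp (fun x hx => by
          have := this hx; simp [Finset.mem_sdiff, hx] at this)
        simp [this] at hT3
      have hdisj : ∀ U ∈ F, Disjoint T U := fun U hU =>
        Finset.disjoint_left.mpr (fun x hx hxU => by
          have := (hF1 U hU).2 hxU; simp [Finset.mem_sdiff, hx] at this)
      refine ⟨insert T F, ?_, ?_, ?_⟩
      · intro U hU
        rcases Finset.mem_insert.mp hU with rfl | hU
        · exact ⟨hT, hTs⟩
        · exact ⟨(hF1 U hU).1, (hF1 U hU).2.trans Finset.sdiff_subset⟩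
      · rw [Finset.coe_insert]
        refine Set.Pairwise.insert hF2 (fun U hU hne => ?_)
        exact ⟨hdisj U hU, (hdisj U hU).symm⟩
      · rw [Finset.card_insert_of_notMem hTF]
        push_cast
        push_cast [hsd] at hF3
        omega

lemma bowtie (hsym : ∀ x y, c x y = c y x) {s : Finset V}
    (hR : ∃ T ⊆ s, IsTri c true T) (hB : ∃ T ⊆ s, IsTri c false T) :
    ∃ S ⊆ s, S.card ≤ 5 ∧ (∃ T ⊆ S, IsTri c true T) ∧ (∃ T ⊆ S, IsTri c false T) := by
  obtain ⟨R, hRs, hRt⟩ := hR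
  obtain ⟨B, hBs, hBt⟩ := hB
  have hR3 := hRt.1
  have hB3 := hBt.1
  by_cases hd : Disjoint R B
  · -- disjoint case: cross edges
    have hne : ∀ r ∈ R, ∀ b ∈ B, r ≠ b := fun r hr b hb =>
      fun h => Finset.disjoint_left.mp hd hr (h ▸ hb)
    obtain ⟨r1, hr1, r2, hr2, hr12⟩ := Finset.one_lt_card.mp (by omega : 1 < R.card)
    have split : ∀ r, (B.filter (fun y => c r y = true)).card +
        (B.filter (fun y => ¬ (c r y = true))).card = B.card :=
      fun r => Finset.card_filter_add_card_filter_not _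
    have blueCase : ∀ r ∈ R, (B.filter (fun y => c r y = true)).card ≤ 1 →
        ∃ S ⊆ s, S.card ≤ 5 ∧ (∃ T ⊆ S, IsTri c true T) ∧
          (∃ T ⊆ S, IsTri c false T) := by
      intro r hr hle
      have h2 : 2 ≤ (B.filter (fun y => ¬ (c r y = true))).card := by
        have := split r; rw [hBt.1] at this; omega
      obtain ⟨b, hb, b', hb', hbb'⟩ := Finset.one_lt_card.mp
        (show (1:ℕ) < (B.filter (fun y => ¬ (c r y = true))).card by omega)
      have hbB := Finset.filter_subset _ _ hb
      have hb'B := Finset.filter_subset _ _ hb'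
      have e1 : c r b = false := bool_neq (Finset.mem_filter.mp hb).2
      have e2 : c r b' = false := bool_neq (Finset.mem_filter.mp hb').2
      have e3 : c b b' = false := hBt.2 b hbB b' hb'B hbb'
      refine ⟨R ∪ {b, b'}, Finset.union_subset hRs (Finset.insert_subset_iff.mpr
          ⟨hBs hbB, Finset.singleton_subset_iff.mpr (hBs hb'B)⟩),
        ?_, ⟨R, Finset.subset_union_left, hRt⟩,
        ⟨{r, b, b'}, ?_, isTri_mk hsym (hne r hr b hbB) (hne r hr b' hb'B) hbb' e1 e2 e3⟩⟩
      · have hc2 : ({b, b'} : Finset V).card ≤ 2 :=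
          (Finset.card_insert_le _ _).trans (by simp)
        have hcu := Finset.card_union_le R ({b, b'} : Finset V)
        omega
      · intro x hx
        rcases Finset.mem_insert.mp hx with rfl | hx
        · exact Finset.mem_union_left _ hr
        · exact Finset.mem_union_right _ hx
    by_cases h1 : (B.filter (fun y => c r1 y = true)).card ≤ 1
    · exact blueCase r1 hr1 h1
    · by_cases h2 : (B.filter (fun y => c r2 y = true)).card ≤ 1
      · exact blueCase r2 hr2 h2
      · -- both have ≥2 true neighbors; intersection nonempty
        have hXB : (B.filter (fun y => c r1 y = true)) ∪
            (B.filter (fun y => c r2 y = true)) ⊆ B :=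
          Finset.union_subset (Finset.filter_subset _ _) (Finset.filter_subset _ _)
        have hcard := Finset.card_union_add_card_inter
          (B.filter (fun y => c r1 y = true)) (B.filter (fun y => c r2 y = true))
        have hub : ((B.filter (fun y => c r1 y = true)) ∪
            (B.filter (fun y => c r2 y = true))).card ≤ 3 :=
          (Finset.card_le_card hXB).trans (by omega)
        obtain ⟨b, hbmem⟩ : ((B.filter (fun y => c r1 y = true)) ∩
            (B.filter (fun y => c r2 y = true))).Nonempty :=
          Finset.card_pos.mp (by omega)
        rw [Finset.mem_inter] at hbmem
        have hbB := Finset.filter_subset _ _ hbmem.1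
        have e1 : c r1 b = true := (Finset.mem_filter.mp hbmem.1).2
        have e2 : c r2 b = true := (Finset.mem_filter.mp hbmem.2).2
        have e3 : c r1 r2 = true := hRt.2 r1 hr1 r2 hr2 hr12
        refine ⟨B ∪ {r1, r2}, Finset.union_subset hBs (Finset.insert_subset_iff.mpr
            ⟨hRs hr1, Finset.singleton_subset_iff.mpr (hRs hr2)⟩),
          ?_, ⟨{r1, r2, b}, ?_, isTri_mk hsym hr12 (hne r1 hr1 b hbB) (hne r2 hr2 b hbB)
            e3 e1 e2⟩, ⟨B, Finset.subset_union_left, hBt⟩⟩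
        · have hc2 : ({r1, r2} : Finset V).card ≤ 2 :=
            (Finset.card_insert_le _ _).trans (by simp)
          have hcu := Finset.card_union_le B ({r1, r2} : Finset V)
          omega
        · intro x hx
          rcases Finset.mem_insert.mp hx with rfl | hx
          · exact Finset.mem_union_right _ (by simp)
          · rcases Finset.mem_insert.mp hx with rfl | hx
            · exact Finset.mem_union_right _ (by simp)
            · have := Finset.mem_singleton.mp hx
              subst this
              exact Finset.mem_union_left _ hbB
  · -- not disjoint: union has ≤ 5 vertices
    have hcard := Finset.card_union_add_card_inter R B
    have hint : 1 ≤ (R ∩ B).card :=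
      Finset.card_pos.mpr (Finset.not_disjoint_iff_nonempty_inter.mp hd)
    exact ⟨R ∪ B, Finset.union_subset hRs hBs, by omega,
      ⟨R, Finset.subset_union_left, hRt⟩, ⟨B, Finset.subset_union_right, hBt⟩⟩

lemma mainLemma (hsym : ∀ x y, c x y = c y x) :
    ∀ (k : ℕ) (s : Finset V), s.card ≤ k →
    ∃ (col : Bool) (F : Finset (Finset V)),
      (∀ T ∈ F, IsTri c col T ∧ T ⊆ s) ∧ (F : Set (Finset V)).Pairwise Disjoint ∧
      (s.card : ℤ) - 5 ≤ 5 * F.card := by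
  intro k
  induction k with
  | zero =>
    intro s hs
    exact ⟨true, ∅, by simp, by simp, by simp; omega⟩
  | succ k ih =>
    intro s hs
    by_cases hboth : (∃ T ⊆ s, IsTri c true T) ∧ (∃ T ⊆ s, IsTri c false T)
    · obtain ⟨S, hSs, hS5, htrue, hfalse⟩ := bowtie hsym hboth.1 hboth.2
      have hS3 : 3 ≤ S.card := by
        obtain ⟨T, hTS, hT⟩ := htrue
        have h1 := Finset.card_le_card hTS
        have h2 := hT.1
        omega
      have hsd : (s \ S).card = s.card - S.card := Finset.card_sdiff_of_subset hSs
      obtain ⟨col, F, hF1, hF2, hF3⟩ := ih (s \ S) (by omega)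
      obtain ⟨T, hTS, hT⟩ : ∃ T ⊆ S, IsTri c col T := by
        cases col
        · exact hfalse
        · exact htrue
      have hTF : T ∉ F := by
        intro h
        have hsub := (hF1 T h).2
        have : T = ∅ := Finset.subset_empty.mp (fun x hx => by
          have := hsub hx
          exact absurd (hTS hx) (Finset.mem_sdiff.mp this).2)
        have hc := hT.1
        rw [this] at hc
        simp at hc
      have hdisj : ∀ U ∈ F, Disjoint T U := fun U hU =>
        Finset.disjoint_left.mpr (fun x hx hxU =>
          (Finset.mem_sdiff.mp ((hF1 U hU).2 hxU)).2 (hTS hx))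
      refine ⟨col, insert T F, ?_, ?_, ?_⟩
      · intro U hU
        rcases Finset.mem_insert.mp hU with rfl | hU
        · exact ⟨hT, hTS.trans hSs⟩
        · exact ⟨(hF1 U hU).1, (hF1 U hU).2.trans Finset.sdiff_subset⟩
      · rw [Finset.coe_insert]
        exact Set.Pairwise.insert hF2 (fun U hU hne => ⟨hdisj U hU, (hdisj U hU).symm⟩)
      · rw [Finset.card_insert_of_notMem hTF]
        have hle : S.card ≤ s.card := Finset.card_le_card hSs
        have hz : ((s \ S).card : ℤ) = (s.card : ℤ) - S.card := by
          rw [hsd]; exact Nat.cast_sub hle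
        rw [hz] at hF3
        push_cast
        omega
    · rw [not_and_or] at hboth
      rcases hboth with h | h
      · obtain ⟨F, hF1, hF2, hF3⟩ := greedy hsym false (k+1) s hs (by
          intro T hTs hT
          exact h ⟨T, hTs, by simpa using hT⟩)
        exact ⟨false, F, hF1, hF2, by omega⟩
      · obtain ⟨F, hF1, hF2, hF3⟩ := greedy hsym true (k+1) s hs (by
          intro T hTs hT
          exact h ⟨T, hTs, by simpa using hT⟩)
        exact ⟨true, F, hF1, hF2, by omega⟩

/-- In every 2-edge-coloring of `K_n` there is a monochromatic family of pairwise
vertex-disjoint triangles of size at least `(n-5)/5`, covering at least `(3/5)(n-5)`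
vertices. -/
theorem stmt_4 (n : ℕ) (c : Fin n → Fin n → Bool) (hsym : ∀ x y, c x y = c y x) :
    ∃ (col : Bool) (F : Finset (Finset (Fin n))),
      (∀ T ∈ F, IsTri c col T) ∧ (F : Set (Finset (Fin n))).Pairwise Disjoint ∧
      (n : ℤ) - 5 ≤ 5 * F.card := by
  obtain ⟨col, F, hF1, hF2, hF3⟩ := mainLemma hsym n Finset.univ (by simp)
  refine ⟨col, F, fun T hT => (hF1 T hT).1, hF2, ?_⟩
  simpa using hF3
end

section
/- Let (n_i) be a strictly increasing sequence of natural numbers with n_{i+1}/n_i → ∞, let τ > 0 and c ≥ 0, and let S ⊆ ℕ. Suppose there are infinitely many indices i for which there exists t_i ∈ [τ(n_i − n_{i−1}), n_i − n_{i−1}] with |S ∩ (n_{i−1}, n_{i−1}+t_i]| ≥ c · t_i. Then the upper density of S satisfies d̄(S) ≥ c. -/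
open Filter Classical in
/-- The upper density of a set of natural numbers:
`limsup_{t → ∞} |S ∩ {1,…,t}| / t`. -/
noncomputable def upperDensity (S : Set ℕ) : ℝ :=
  limsup (fun t : ℕ =>
    (((Finset.Icc 1 t).filter (fun x => x ∈ S)).card : ℝ) / t) atTop

open Filter Classical in
/-- If `(n_i)` is strictly increasing with `n_{i+1}/n_i → ∞`, `τ > 0`, `c ≥ 0`, and for
infinitely many `i` there is `t ∈ [τ(n_{i+1} - n_i), n_{i+1} - n_i]` with
`|S ∩ (n_i, n_i + t]| ≥ c·t`, then the upper density of `S` is at least `c`. -/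
theorem stmt_7 (n : ℕ → ℕ) (hmono : StrictMono n)
    (hratio : Tendsto (fun i => (n (i + 1) : ℝ) / n i) atTop atTop)
    (τ : ℝ) (hτ : 0 < τ) (c : ℝ) (hc : 0 ≤ c) (S : Set ℕ)
    (hfreq : ∃ᶠ i in atTop, ∃ t : ℕ,
      τ * ((n (i + 1) : ℝ) - n i) ≤ t ∧ (t : ℝ) ≤ (n (i + 1) : ℝ) - n i ∧
      c * t ≤ (((Finset.Ioc (n i) (n i + t)).filter (fun x => x ∈ S)).card : ℝ)) :
    c ≤ upperDensity S := by
  set f : ℕ → ℝ := fun t : ℕ =>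
    (((Finset.Icc 1 t).filter (fun x => x ∈ S)).card : ℝ) / t with hf
  have hf0 : ∀ t, 0 ≤ f t := fun t => div_nonneg (by positivity) (by positivity)
  have hfbound : IsBoundedUnder (· ≤ ·) atTop f := by
    refine isBoundedUnder_of ⟨1, fun t => ?_⟩
    simp only [hf]
    rcases Nat.eq_zero_or_pos t with rfl | ht
    · simp
    · rw [div_le_one (by exact_mod_cast ht)]
      have : ((Finset.Icc 1 t).filter (fun x => x ∈ S)).card ≤ (Finset.Icc 1 t).card :=
        Finset.card_filter_le _ _
      have h2 : (Finset.Icc 1 t).card = t := by simp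
      exact_mod_cast this.trans h2.le
  suffices h : ∀ ε : ℝ, 0 < ε → c - ε ≤ upperDensity S by
    by_contra h'
    push_neg at h'
    have := h ((c - upperDensity S) / 2) (by linarith)
    linarith
  intro ε hε
  refine le_limsup_of_frequently_le ?_ hfbound
  rcases le_or_gt c ε with hce | hce
  · exact Frequently.of_forall fun t => by linarith [hf0 t]
  set K : ℝ := c / (ε * τ) with hK
  have hKc : ε * τ * K = c := by
    rw [hK]; field_simp
  have hev : ∀ᶠ i in atTop, 1 ≤ i ∧ 1 + K ≤ (n (i + 1) : ℝ) / n i :=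
    (eventually_ge_atTop 1).and (hratio.eventually_ge_atTop (1 + K))
  have hfreq2 := hfreq.and_eventually hev
  rw [frequently_atTop] at hfreq2 ⊢
  intro m
  obtain ⟨i, him, ⟨t, ht1, ht2, hcard⟩, hi1, hKr⟩ := hfreq2 m
  have hni : 1 ≤ n i := le_trans hi1 hmono.le_apply
  refine ⟨n i + t, le_trans him (le_trans hmono.le_apply (Nat.le_add_right _ _)), ?_⟩
  set N := n i + t with hN
  have hsub : Finset.Ioc (n i) (n i + t) ⊆ Finset.Icc 1 N := by
    intro x hx
    simp only [Finset.mem_Ioc, Finset.mem_Icc] at hx ⊢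
    exact ⟨hni.trans hx.1.le, hx.2⟩
  have hcard2 : (((Finset.Ioc (n i) (n i + t)).filter (fun x => x ∈ S)).card : ℝ)
      ≤ (((Finset.Icc 1 N).filter (fun x => x ∈ S)).card : ℝ) := by
    exact_mod_cast Finset.card_le_card (Finset.filter_subset_filter _ hsub)
  have ha : (1 : ℝ) ≤ (n i : ℝ) := by exact_mod_cast hni
  set a : ℝ := (n i : ℝ) with hadef
  set b : ℝ := (n (i + 1) : ℝ) with hbdef
  have hapos : 0 < a := by linarith
  have hDa : K * a ≤ b - a := by
    have h1 : (1 + K) * a ≤ b := (le_div_iff₀ hapos).mp hKr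
    nlinarith
  have htr0 : (0 : ℝ) ≤ (t : ℝ) := Nat.cast_nonneg t
  have hεt : c * a ≤ ε * (t : ℝ) := by
    have h1 : ε * τ * (K * a) ≤ ε * τ * (b - a) :=
      mul_le_mul_of_nonneg_left hDa (by positivity)
    have h2 : ε * (τ * (b - a)) ≤ ε * (t : ℝ) := mul_le_mul_of_nonneg_left ht1 hε.le
    have h3 : ε * τ * (K * a) = c * a := by rw [← hKc]; ring
    nlinarith
  have hNcast : (N : ℝ) = a + (t : ℝ) := by rw [hN]; push_cast; ring
  have hNpos : (0 : ℝ) < (N : ℝ) := by rw [hNcast]; linarith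
  show c - ε ≤ f N
  simp only [hf]
  rw [le_div_iff₀ hNpos, hNcast]
  nlinarith [hcard.trans hcard2]
end

section
/- For every ε > 0 and s ∈ ℕ there exist T, N ∈ ℕ with the following property: for every red-blue edge-coloring of K_n with n > N, there is a partition of the vertex set into T parts V_1,...,V_T whose sizes differ by at most 1, and colors C_1,...,C_T ∈ {R,B}, such that all but at most εT of the parts V_i are (C_i, ε, s)-adequate. -/
/-!
Take a maximal family of disjoint red copies of `K_α`, then a maximal family of disjoint blue
copies of `K_α` among the remaining vertices; by Ramsey's theorem fewer than `R(α, α)` vertices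
stay uncovered. List the vertices clique by clique, red cliques first and uncovered vertices last,
and cut the list into `T` consecutive intervals of almost equal length. Only the (at most two)
intervals having the red/blue boundary or the start of the uncovered tail in their interior can
fail. Any other interval of length `m` meets at most `m / α + 2` cliques, all of one colour `C`, so
each of its subsets of size at least `εm > s (m / α + 2)` has `s` vertices in a common clique,
and these span a `C`-coloured `K_s`.
-/

/-- `K` is a clique of color `col` and size `s` under the edge-coloring `c`. -/
def IsCliqueOf {V : Type*} [DecidableEq V] (c : V → V → Bool) (col : Bool) (s : ℕ)
    (K : Finset V) : Prop :=
  K.card = s ∧ ∀ x ∈ K, ∀ y ∈ K, x ≠ y → c x y = col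

/-- `X` is `(C, ε, s)`-adequate: every subset of `X` of size at least `ε|X|` contains a
`C`-colored clique of size `s`. -/
def Adequate {V : Type*} [DecidableEq V] (c : V → V → Bool) (C : Bool) (ε : ℝ) (s : ℕ)
    (X : Finset V) : Prop :=
  ∀ Y ⊆ X, ε * X.card ≤ Y.card → ∃ K ⊆ Y, IsCliqueOf c C s K

open Finset Function

section Cliques

variable {V : Type*} [DecidableEq V] {c : V → V → Bool}

theorem IsCliqueOf.insert (hc : ∀ x y, c x y = c y x) {col : Bool} {k : ℕ} {K : Finset V}
    {v : V} (hK : IsCliqueOf c col k K) (hv : ∀ y ∈ K, y ≠ v ∧ c v y = col) :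
    IsCliqueOf c col (k + 1) (insert v K) := by
  refine ⟨by rw [card_insert_of_notMem fun h => (hv v h).1 rfl, hK.1], ?_⟩
  simp only [mem_insert]
  rintro x (rfl | hx) y (rfl | hy) hxy
  · exact absurd rfl hxy
  · exact (hv y hy).2
  · rw [hc]; exact (hv x hx).2
  · exact hK.2 x hx y hy hxy

theorem isCliqueOf_empty (col : Bool) : IsCliqueOf c col 0 ∅ := by
  simp [IsCliqueOf]

theorem exists_isCliqueOf_true_or_false (hc : ∀ x y, c x y = c y x) (a b : ℕ) {S : Finset V}
    (hS : (a + b).choose a ≤ #S) :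
    (∃ K ⊆ S, IsCliqueOf c true a K) ∨ ∃ K ⊆ S, IsCliqueOf c false b K := by
  induction a generalizing b S with
  | zero => exact Or.inl ⟨∅, empty_subset _, isCliqueOf_empty _⟩
  | succ a iha =>
    induction b generalizing S with
    | zero => exact Or.inr ⟨∅, empty_subset _, isCliqueOf_empty _⟩
    | succ b ihb =>
      obtain ⟨v, hv⟩ : S.Nonempty := card_pos.1 (lt_of_lt_of_le (Nat.choose_pos (by omega)) hS)
      set A := (S.erase v).filter (fun y => c v y = true)
      set B := (S.erase v).filter (fun y => c v y = false)
      have hAB : #A + #B + 1 = #S := by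
        have : #A + #B = #(S.erase v) := by
          simpa [A, B] using card_filter_add_card_filter_not (s := S.erase v) (fun y => c v y = true)
        rw [this, card_erase_add_one hv]
      have hchoose : (a + 1 + (b + 1)).choose (a + 1)
          = (a + (b + 1)).choose a + (a + 1 + b).choose (a + 1) := by
        rw [show a + 1 + (b + 1) = (a + 1 + b) + 1 by omega, Nat.choose_succ_succ,
          show a + 1 + b = a + (b + 1) by omega]
      have hsub : ∀ col, (S.erase v).filter (fun y => c v y = col) ⊆ S :=
        fun _ => (filter_subset _ _).trans (erase_subset _ _)
      have hext : ∀ col, ∀ y ∈ (S.erase v).filter (fun y => c v y = col), y ≠ v ∧ c v y = col :=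
        fun _ y hy => by simp only [mem_filter, mem_erase] at hy; exact ⟨hy.1.1, hy.2⟩
      rcases (by omega : (a + (b + 1)).choose a ≤ #A ∨ (a + 1 + b).choose (a + 1) ≤ #B)
        with hA | hB
      · rcases iha (b + 1) hA with ⟨K, hKA, hK⟩ | ⟨K, hKA, hK⟩
        · exact Or.inl ⟨insert v K, insert_subset hv (hKA.trans (hsub _)),
            hK.insert hc fun y hy => hext _ y (hKA hy)⟩
        · exact Or.inr ⟨K, hKA.trans (hsub _), hK⟩
      · rcases ihb hB with ⟨K, hKB, hK⟩ | ⟨K, hKB, hK⟩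
        · exact Or.inl ⟨K, hKB.trans (hsub _), hK⟩
        · exact Or.inr ⟨insert v K, insert_subset hv (hKB.trans (hsub _)),
            hK.insert hc fun y hy => hext _ y (hKB hy)⟩

end Cliques

theorem exists_maximal_pairwise_disjoint {V : Type*} [DecidableEq V] (P : Finset V → Prop)
    (hP : ∀ K, P K → K.Nonempty) (S : Finset V) :
    ∃ L : List (Finset V), L.Pairwise Disjoint ∧ (∀ K ∈ L, K ⊆ S ∧ P K) ∧
      ∀ K ⊆ S, (∀ K' ∈ L, Disjoint K K') → ¬ P K := by
  induction S using Finset.strongInduction with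
  | _ S ih =>
    by_cases h : ∃ K ⊆ S, P K
    · obtain ⟨K, hKS, hK⟩ := h
      obtain ⟨x, hx⟩ := hP K hK
      obtain ⟨L, hL, hLS, hmax⟩ :=
        ih (S \ K) (sdiff_ssubset hKS ⟨x, hx⟩)
      refine ⟨K :: L, List.pairwise_cons.2 ⟨fun K' hK' => ?_, hL⟩, ?_, ?_⟩
      · exact disjoint_of_subset_right (hLS K' hK').1 disjoint_sdiff
      · simp only [List.mem_cons, forall_eq_or_imp]
        exact ⟨⟨hKS, hK⟩, fun K' hK' => ⟨(hLS K' hK').1.trans sdiff_subset, (hLS K' hK').2⟩⟩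
      · intro K'' hK''S hdisj
        simp only [List.mem_cons, forall_eq_or_imp] at hdisj
        exact hmax K'' (subset_sdiff.2 ⟨hK''S, hdisj.1⟩) hdisj.2
    · exact ⟨[], List.Pairwise.nil, by simp, fun K hK _ hPK => h ⟨K, hK, hPK⟩⟩

theorem card_biUnion_univ_of_card_eq {V : Type*} [DecidableEq V] {q α : ℕ}
    (B : Fin q → Finset V) (hB : Pairwise (Disjoint on B)) (hcard : ∀ j, #(B j) = α) :
    #(univ.biUnion B) = q * α := by
  rw [card_biUnion fun i _ j _ h => hB h]
  simp [hcard]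

theorem exists_equiv_fin_div_eq_imp_mem {V : Type*} [Fintype V] [DecidableEq V] {n q α : ℕ}
    (hn : Fintype.card V = n) (hα : 0 < α) (B : Fin q → Finset V)
    (hB : Pairwise (Disjoint on B)) (hcard : ∀ j, #(B j) = α) :
    ∃ e : V ≃ Fin n, ∀ x (j : Fin q), (e x : ℕ) / α = j → x ∈ B j := by
  set U := univ.biUnion B
  have hU : #U = q * α := card_biUnion_univ_of_card_eq B hB hcard
  let g : ∀ j, Fin α ≃ B j := fun j => (equivFinOfCardEq (hcard j)).symm
  let φ : Fin q × Fin α → U := fun jr =>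
    ⟨g jr.1 jr.2, mem_biUnion.2 ⟨jr.1, mem_univ _, (g jr.1 jr.2).2⟩⟩
  have hφ : Function.Bijective φ := by
    refine (Fintype.bijective_iff_injective_and_card φ).2 ⟨?_, by simp [hU]⟩
    rintro ⟨j, r⟩ ⟨j', r'⟩ h
    have hv : (g j r : V) = g j' r' := congrArg Subtype.val h
    obtain rfl : j = j' := by
      by_contra hjj
      exact disjoint_left.1 (hB hjj) (g j r).2 (hv ▸ (g j' r').2)
    simpa using (g j).injective (Subtype.ext hv)
  have hle : q * α ≤ n := hn ▸ hU ▸ card_le_univ U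
  have hcompl : Fintype.card {x // x ∉ U} = n - q * α := by
    rw [Fintype.card_subtype_compl, Fintype.card_coe, hU, hn]
  let E : Fin n ≃ V := (finCongr (Nat.add_sub_cancel' hle).symm).trans <|
    finSumFinEquiv.symm.trans <|
      ((finProdFinEquiv.symm.trans (Equiv.ofBijective φ hφ)).sumCongr
        (Fintype.equivFinOfCardEq hcompl).symm).trans (Equiv.sumCompl (· ∈ U))
  refine ⟨E.symm, fun x j hj => ?_⟩
  obtain ⟨k, rfl⟩ := E.surjective x
  rw [Equiv.symm_apply_apply] at hj
  have hk : (k : ℕ) < q * α := by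
    rw [← Nat.div_lt_iff_lt_mul hα, hj]; exact j.2
  have hcast : finCongr (Nat.add_sub_cancel' hle).symm k = Fin.castAdd (n - q * α) ⟨k, hk⟩ :=
    Fin.ext rfl
  have hdiv : (⟨k, hk⟩ : Fin (q * α)).divNat = j := Fin.ext (by simp [Fin.coe_divNat, hj])
  simp only [E, Equiv.trans_apply, hcast, finSumFinEquiv_symm_apply_castAdd, Equiv.sumCongr_apply,
    Sum.map_inl, Equiv.sumCompl_apply_inl, finProdFinEquiv_symm_apply, Equiv.ofBijective_apply, φ,
    hdiv]
  exact (g j _).2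

theorem exists_sorted_isCliqueOf_cover {V : Type*} [Fintype V] [DecidableEq V]
    {c : V → V → Bool} (hc : ∀ x y, c x y = c y x) {α : ℕ} (hα : 0 < α) :
    ∃ (q p : ℕ) (B : Fin q → Finset V), p ≤ q ∧ Pairwise (Disjoint on B) ∧
      (∀ j : Fin q, IsCliqueOf c (decide ((j : ℕ) < p)) α (B j)) ∧
      #(univ.biUnion B)ᶜ < (α + α).choose α := by
  have hne : ∀ col K, IsCliqueOf c col α K → K.Nonempty := fun _ K hK => card_pos.1 (hK.1 ▸ hα)
  obtain ⟨Lr, hLr, hLrS, hLrmax⟩ := exists_maximal_pairwise_disjoint _ (hne true) univ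
  set S := univ.filter fun x => ∀ K ∈ Lr, x ∉ K
  obtain ⟨Lb, hLb, hLbS, hLbmax⟩ := exists_maximal_pairwise_disjoint _ (hne false) S
  set L := Lr ++ Lb
  have hL : L.Pairwise Disjoint := List.pairwise_append.2 ⟨hLr, hLb, fun K hK K' hK' =>
    disjoint_left.2 fun x hx hx' => (mem_filter.1 ((hLbS K' hK').1 hx')).2 K hK hx⟩
  refine ⟨L.length, Lr.length, fun j => L[j], by simp [L], fun i j hij => ?_, fun j => ?_, ?_⟩
  · rcases lt_or_gt_of_ne (Fin.val_ne_of_ne hij) with h | h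
    · exact List.pairwise_iff_getElem.1 hL _ _ _ _ h
    · exact (List.pairwise_iff_getElem.1 hL _ _ _ _ h).symm
  · by_cases hj : (j : ℕ) < Lr.length
    · simpa [hj, L, List.getElem_append_left hj] using (hLrS _ (List.getElem_mem hj)).2
    · have hj' : (j : ℕ) - Lr.length < Lb.length := by
        have := j.2; simp only [L, List.length_append] at this; omega
      simpa [hj, L, List.getElem_append_right (not_lt.1 hj)] using
        (hLbS _ (List.getElem_mem hj')).2
  · have hZ : ∀ x ∈ (univ.biUnion fun j : Fin L.length => L[j])ᶜ, ∀ K ∈ L, x ∉ K := by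
      intro x hx K hK hxK
      obtain ⟨j, hj, rfl⟩ := List.mem_iff_getElem.1 hK
      exact mem_compl.1 hx (mem_biUnion.2 ⟨⟨j, hj⟩, mem_univ _, hxK⟩)
    -- an uncovered monochromatic `K_α` would contradict the maximality of `Lr` or of `Lb`
    by_contra! hR
    rcases exists_isCliqueOf_true_or_false hc α α hR with ⟨K, hKZ, hK⟩ | ⟨K, hKZ, hK⟩
    · refine hLrmax K (subset_univ K) (fun K' hK' => disjoint_left.2 fun x hx hx' => ?_) hK
      exact hZ x (hKZ hx) K' (List.mem_append_left _ hK') hx'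
    · refine hLbmax K (fun x hx => mem_filter.2 ⟨mem_univ x, fun K' hK' => ?_⟩)
        (fun K' hK' => disjoint_left.2 fun x hx hx' => ?_) hK
      · exact hZ x (hKZ hx) K' (List.mem_append_left _ hK')
      · exact hZ x (hKZ hx) K' (List.mem_append_right _ hK') hx'

theorem exists_equiv_fin_monochromatic_blocks {V : Type*} [Fintype V] [DecidableEq V]
    {c : V → V → Bool} (hc : ∀ x y, c x y = c y x) {n α : ℕ} (hn : Fintype.card V = n)
    (hα : 0 < α) :
    ∃ (e : V ≃ Fin n) (p q : ℕ), p ≤ q ∧ n < q * α + (α + α).choose α ∧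
      ∀ x y, x ≠ y → (e x : ℕ) / α = (e y : ℕ) / α → (e x : ℕ) / α < q →
        c x y = decide ((e x : ℕ) / α < p) := by
  obtain ⟨q, p, B, hpq, hB, hcl, hR⟩ := exists_sorted_isCliqueOf_cover hc hα
  obtain ⟨e, he⟩ := exists_equiv_fin_div_eq_imp_mem hn hα B hB fun j => (hcl j).1
  refine ⟨e, p, q, hpq, ?_, fun x y hxy hxy' hxq => ?_⟩
  · rw [← hn, ← card_add_card_compl (univ.biUnion B),
      card_biUnion_univ_of_card_eq B hB fun j => (hcl j).1]
    omega
  · exact (hcl ⟨_, hxq⟩).2 x (he x _ rfl) y (he y _ hxy'.symm) hxy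

theorem exists_mem_Ico_succ {a : ℕ → ℕ} {k T : ℕ} (h0 : a 0 ≤ k) (hT : k < a T) :
    ∃ i < T, k ∈ Ico (a i) (a (i + 1)) := by
  obtain ⟨T, rfl⟩ : ∃ T', T = T' + 1 := Nat.exists_eq_succ_of_ne_zero (by rintro rfl; omega)
  have hex : ∃ i, k < a (i + 1) := ⟨T, hT⟩
  refine ⟨Nat.find hex, Nat.lt_succ_of_le (Nat.find_min' hex hT),
    mem_Ico.2 ⟨?_, Nat.find_spec hex⟩⟩
  rcases h : Nat.find hex with _ | j
  · exact h0
  · exact not_lt.1 (Nat.find_min hex (h ▸ j.lt_succ_self))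

theorem card_filter_lt_lt_le_one {a : ℕ → ℕ} (ha : Monotone a) (T b : ℕ) :
    #{i : Fin T | a i < b ∧ b < a (i + 1)} ≤ 1 := by
  refine card_le_one.2 fun i hi j hj => ?_
  simp only [mem_filter, mem_univ, true_and] at hi hj
  by_contra hij
  rcases lt_or_gt_of_ne (Fin.val_ne_of_ne hij) with h | h
  · have := ha (show (i : ℕ) + 1 ≤ j from h); omega
  · have := ha (show (j : ℕ) + 1 ≤ i from h); omega

theorem succ_mul_div_sub_mul_div_eq_or (i n T : ℕ) :
    (i + 1) * n / T - i * n / T = n / T ∨ (i + 1) * n / T - i * n / T = n / T + 1 := by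
  have h1 := Nat.div_add_div_le_add_div (x := i * n) (y := n) (z := T)
  have h2 := Nat.add_div_le_div_add_div_add_one (i * n) n T
  rw [show i * n + n = (i + 1) * n by ring] at h1 h2
  generalize (i + 1) * n / T = b, i * n / T = a, n / T = d at h1 h2 ⊢
  omega

section IntervalPart

variable {V : Type*} [Fintype V] {n : ℕ}

theorem card_filter_val_mem_Ico (e : V ≃ Fin n) {a b : ℕ} (hb : b ≤ n) :
    #{x | (e x : ℕ) ∈ Ico a b} = b - a := by
  rw [← Nat.card_Ico a b, ← card_image_of_injective _ (Fin.val_injective.comp e.injective)]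
  congr 1
  ext k
  simp only [mem_image, mem_filter, mem_univ, true_and, comp_apply]
  refine ⟨fun ⟨x, hx, hxk⟩ => hxk ▸ hx, fun hk => ⟨e.symm ⟨k, ?_⟩, by simpa using hk, by simp⟩⟩
  exact lt_of_lt_of_le (mem_Ico.1 hk).2 hb

def intervalPart (e : V ≃ Fin n) (T i : ℕ) : Finset V :=
  {x | (e x : ℕ) ∈ Ico (i * n / T) ((i + 1) * n / T)}

variable (e : V ≃ Fin n) {T : ℕ}

theorem mem_intervalPart {i : ℕ} {x : V} :
    x ∈ intervalPart e T i ↔ (e x : ℕ) ∈ Ico (i * n / T) ((i + 1) * n / T) := by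
  simp [intervalPart]

theorem card_intervalPart {i : ℕ} (hi : i < T) :
    #(intervalPart e T i) = (i + 1) * n / T - i * n / T :=
  card_filter_val_mem_Ico e (Nat.div_le_of_le_mul (Nat.mul_le_mul_right n hi))

theorem intervalPart_disjoint {i j : ℕ} (hij : i ≠ j) :
    Disjoint (intervalPart e T i) (intervalPart e T j) := by
  have key : ∀ {i j : ℕ}, i < j → Disjoint (intervalPart e T i) (intervalPart e T j) :=
    fun {i j} h => disjoint_left.2 fun x hi hj => by
      rw [mem_intervalPart, mem_Ico] at hi hj
      have : (i + 1) * n / T ≤ j * n / T := Nat.div_le_div_right (Nat.mul_le_mul_right n h)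
      omega
  rcases lt_or_gt_of_ne hij with h | h
  exacts [key h, (key h).symm]

theorem biUnion_intervalPart [DecidableEq V] (hT : 0 < T) :
    univ.biUnion (fun i : Fin T => intervalPart e T i) = univ := by
  refine eq_univ_of_forall fun x => mem_biUnion.2 ?_
  obtain ⟨i, hi, hx⟩ := exists_mem_Ico_succ (a := fun i => i * n / T) (k := e x) (T := T)
    (by simp) (by rw [Nat.mul_div_cancel_left n hT]; exact (e x).2)
  exact ⟨⟨i, hi⟩, mem_univ _, (mem_intervalPart e).2 hx⟩

end IntervalPart

theorem card_image_div_Ico_le (a b α : ℕ) : #((Ico a b).image (· / α)) ≤ (b - a) / α + 2 := by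
  rcases le_or_gt b a with hba | hab
  · simp [Ico_eq_empty_of_le hba]
  have hsub : (Ico a b).image (· / α) ⊆ Icc (a / α) (b / α) := fun j hj => by
    obtain ⟨k, hk, rfl⟩ := mem_image.1 hj
    exact mem_Icc.2 ⟨Nat.div_le_div_right (mem_Ico.1 hk).1,
      Nat.div_le_div_right (mem_Ico.1 hk).2.le⟩
  have hb := Nat.add_div_le_div_add_div_add_one a (b - a) α
  rw [Nat.add_sub_cancel' hab.le] at hb
  have := (card_le_card hsub).trans_eq (Nat.card_Icc _ _)
  generalize a / α = x, b / α = y, (b - a) / α = z at hb this ⊢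
  omega

section Adequate

variable {V : Type*} [DecidableEq V] {c : V → V → Bool} {C : Bool} {ε : ℝ} {s : ℕ}
  {X : Finset V}

theorem adequate_of_card_image_lt {ι : Type*} [DecidableEq ι] (f : V → ι)
    (hf : ∀ x ∈ X, ∀ y ∈ X, x ≠ y → f x = f y → c x y = C)
    (h : (s : ℝ) * #(X.image f) < ε * #X) : Adequate c C ε s X := by
  intro Y hYX hY
  have hYlt : ((#(X.image f) * s : ℕ) : ℝ) < #Y := by push_cast; linarith
  obtain ⟨y, hy⟩ : Y.Nonempty := card_pos.1 (by exact_mod_cast (Nat.cast_nonneg _).trans_lt hYlt)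
  obtain ⟨j, -, hj⟩ := exists_le_card_fiber_of_mul_le_card_of_maps_to
    (fun y hy => mem_image_of_mem f (hYX hy)) ⟨f y, mem_image_of_mem f (hYX hy)⟩
    (by exact_mod_cast hYlt.le)
  obtain ⟨K, hK, hKcard⟩ := exists_subset_card_eq hj
  refine ⟨K, hK.trans (filter_subset _ _), hKcard, fun x hx y hy hxy => ?_⟩
  obtain ⟨hxY, hxj⟩ := mem_filter.1 (hK hx)
  obtain ⟨hyY, hyj⟩ := mem_filter.1 (hK hy)
  exact hf x (hYX hxY) y (hYX hyY) hxy (hxj.trans hyj.symm)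

theorem adequate_of_forall_mem_Ico (pos : V → ℕ) {a b α : ℕ} (hX : ∀ x ∈ X, pos x ∈ Ico a b)
    (hf : ∀ x ∈ X, ∀ y ∈ X, x ≠ y → pos x / α = pos y / α → c x y = C)
    (h : (s : ℝ) * ((b - a) / α + 2 : ℕ) < ε * #X) : Adequate c C ε s X := by
  refine adequate_of_card_image_lt (pos · / α) hf (lt_of_le_of_lt ?_ h)
  have : X.image (pos · / α) ⊆ (Ico a b).image (· / α) := fun j hj => by
    obtain ⟨x, hx, rfl⟩ := mem_image.1 hj
    exact mem_image_of_mem _ (hX x hx)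
  gcongr
  exact (card_le_card this).trans (card_image_div_Ico_le a b α)

end Adequate

theorem mul_div_add_two_lt {ε : ℝ} {s K m α : ℕ} (hK : 1 ≤ ε * K) (hα : 4 * (s + 1) * K ≤ α)
    (hm : 8 * (s + 1) * K ≤ m) : (s : ℝ) * (m / α + 2 : ℕ) < ε * m := by
  have hK0 : 0 < K := Nat.pos_of_ne_zero fun h => by simp [h] at hK; linarith
  have hε : 0 < ε := pos_of_mul_pos_left (by linarith) (Nat.cast_nonneg K)
  set d := m / α
  have hd : d * (4 * (s + 1) * K) ≤ m :=
    (Nat.mul_le_mul_left d hα).trans (Nat.div_mul_le_self m α)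
  have hnat : K * (s * (d + 2)) < m := by nlinarith
  calc (s : ℝ) * (d + 2 : ℕ) ≤ ε * K * (s * (d + 2) : ℕ) := by
        push_cast; nlinarith [(by positivity : (0 : ℝ) ≤ s * (d + 2))]
    _ < ε * m := by
        rw [mul_assoc]
        exact mul_lt_mul_of_pos_left (by exact_mod_cast hnat) hε

theorem adequate_intervalPart_of_not_straddling {V : Type*} [Fintype V] [DecidableEq V]
    {c : V → V → Bool} {ε : ℝ} {s K n T α p q R i : ℕ} (e : V ≃ Fin n)
    (hblock : ∀ x y, x ≠ y → (e x : ℕ) / α = (e y : ℕ) / α → (e x : ℕ) / α < q →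
      c x y = decide ((e x : ℕ) / α < p))
    (hpq : p ≤ q) (hnq : n < q * α + R) (hεK : 1 ≤ ε * K) (hα : 4 * (s + 1) * K ≤ α)
    (hi : i < T) (hnT : R + 8 * (s + 1) * K ≤ n / T)
    (hp : ¬ (i * n / T < p * α ∧ p * α < (i + 1) * n / T))
    (hq : ¬ (i * n / T < q * α ∧ q * α < (i + 1) * n / T)) :
    Adequate c (decide ((i + 1) * n / T ≤ p * α)) ε s (intervalPart e T i) := by
  have hK : 0 < K := Nat.pos_of_ne_zero fun h => by simp [h] at hεK; linarith
  have hα0 : 0 < α := lt_of_lt_of_le (by positivity) hα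
  have hin : (i + 1) * n / T ≤ n := Nat.div_le_of_le_mul (Nat.mul_le_mul_right n hi)
  have hsz : n / T ≤ (i + 1) * n / T - i * n / T := (succ_mul_div_sub_mul_div_eq_or i n T).elim
    (·.ge) fun h => (Nat.le_succ _).trans_eq h.symm
  have hpq' : p * α ≤ q * α := Nat.mul_le_mul_right α hpq
  refine adequate_of_forall_mem_Ico (fun x => (e x : ℕ)) (α := α)
    (fun x hx => (mem_intervalPart e).1 hx) (fun x hx y _ hxy hxy' => ?_) ?_
  · have hk := mem_Ico.1 ((mem_intervalPart e).1 hx)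
    -- a part is longer than the uncovered tail `[q * α, n)`, so it cannot lie inside it
    generalize i * n / T = a, (i + 1) * n / T = b, n / T = m at *
    rw [hblock x y hxy hxy' ((Nat.div_lt_iff_lt_mul hα0).2 (by omega)), decide_eq_decide,
      Nat.div_lt_iff_lt_mul hα0]
    omega
  · rw [card_intervalPart e hi]
    exact mul_div_add_two_lt hεK hα (by omega)

/-- For all `ε > 0` and `s` there are `T, N` such that: every 2-edge-coloring of `K_n` with
`n > N` admits a partition of the vertices into `T` almost equal parts `V₁, …, V_T` with
colors `C₁, …, C_T`, all but at most `εT` of which are `(Cᵢ, ε, s)`-adequate. -/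
theorem stmt_9 (ε : ℝ) (hε : 0 < ε) (s : ℕ) :
    ∃ T N : ℕ, 0 < T ∧ ∀ n : ℕ, N < n → ∀ c : Fin n → Fin n → Bool,
      (∀ x y, c x y = c y x) →
      ∃ (V : Fin T → Finset (Fin n)) (C : Fin T → Bool),
        (∀ i j : Fin T, i ≠ j → Disjoint (V i) (V j)) ∧
        (Finset.univ.biUnion V = Finset.univ) ∧
        (∀ i, (V i).card = n / T ∨ (V i).card = n / T + 1) ∧
        ∃ Bad : Finset (Fin T), (Bad.card : ℝ) ≤ ε * T ∧
          ∀ i ∉ Bad, Adequate c (C i) ε s (V i) := by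
  obtain ⟨K, hK, hεK⟩ : ∃ K : ℕ, 0 < K ∧ 1 ≤ ε * K := ⟨⌈ε⁻¹⌉₊, Nat.ceil_pos.2 (inv_pos.2 hε),
    by simpa [hε.ne'] using mul_le_mul_of_nonneg_left (Nat.le_ceil ε⁻¹) hε.le⟩
  set α := 4 * (s + 1) * K
  set R := (α + α).choose α
  refine ⟨2 * K, 2 * K * (R + 8 * (s + 1) * K), by omega, fun n hn c hc => ?_⟩
  obtain ⟨e, p, q, hpq, hnq, hblock⟩ :=
    exists_equiv_fin_monochromatic_blocks hc (Fintype.card_fin n) (α := α) (by positivity)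
  have hnT : R + 8 * (s + 1) * K ≤ n / (2 * K) :=
    (Nat.le_div_iff_mul_le (by omega)).2 (by linarith)
  have ha : Monotone fun i => i * n / (2 * K) :=
    fun i j h => Nat.div_le_div_right (Nat.mul_le_mul_right n h)
  let straddling (b : ℕ) : Finset (Fin (2 * K)) :=
    {i | i * n / (2 * K) < b ∧ b < (i + 1) * n / (2 * K)}
  refine ⟨fun i => intervalPart e (2 * K) i, fun i => decide ((i + 1) * n / (2 * K) ≤ p * α),
    fun i j hij => intervalPart_disjoint e (Fin.val_ne_of_ne hij),
    biUnion_intervalPart e (by omega),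
    fun i => card_intervalPart e i.2 ▸ succ_mul_div_sub_mul_div_eq_or i n (2 * K),
    straddling (p * α) ∪ straddling (q * α), ?_, fun i hi => ?_⟩
  · calc (#(straddling (p * α) ∪ straddling (q * α)) : ℝ) ≤ 1 + 1 := by
          exact_mod_cast (card_union_le _ _).trans
            (add_le_add (card_filter_lt_lt_le_one ha _ _) (card_filter_lt_lt_le_one ha _ _))
      _ ≤ ε * (2 * K : ℕ) := by push_cast; linarith
  · simp only [straddling, mem_union, mem_filter, mem_univ, true_and, not_or] at hi
    exact adequate_intervalPart_of_not_straddling e hblock hpq hnq hεK le_rfl i.2 hnT hi.1 hi.2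
end

section
/- Let δ = (4√7+2)/27, γ = 1 − 1/√7, and n ∈ ℕ. Suppose nonnegative integers F1, F1', F2, F2', q, q1, q2 satisfy: 3F1 + 2F1' ≥ ⌊δn⌋ − 5; 3F2 + 2F2' ≥ n − ⌊δn⌋ − 5; F2' ≥ F1' = q; q1 + q2 ≥ q; 3F1 < γδn − 7; 3F1 + 3F2' < γn − 7; 3F1' + 3F2 < γn − 7; 3q + q1/2 < γδn − 7; and (3/5)(n + q2) < γn − 7. Then a contradiction follows; i.e., this system of inequalities has no solution. -/
/-- With `δ = (4√7+2)/27` and `γ = 1 - 1/√7`, the system of counting inequalities from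
the proof of `ρ(ω·K₃) ≥ 1 - 1/√7` has no solution in nonnegative integers. -/
theorem stmt_11 (n F1 F1' F2 F2' q q1 q2 : ℕ)
    (δ γ : ℝ) (hδ : δ = (4 * Real.sqrt 7 + 2) / 27) (hγ : γ = 1 - 1 / Real.sqrt 7)
    (h1 : (⌊δ * n⌋₊ : ℝ) - 5 ≤ 3 * F1 + 2 * F1')
    (h2 : (n : ℝ) - ⌊δ * n⌋₊ - 5 ≤ 3 * F2 + 2 * F2')
    (h3 : F1' ≤ F2') (h4 : F1' = q) (h5 : q ≤ q1 + q2)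
    (h6 : 3 * (F1 : ℝ) < γ * δ * n - 7)
    (h7 : 3 * (F1 : ℝ) + 3 * F2' < γ * n - 7)
    (h8 : 3 * (F1' : ℝ) + 3 * F2 < γ * n - 7)
    (h9 : 3 * (q : ℝ) + q1 / 2 < γ * δ * n - 7)
    (h10 : (3 / 5 : ℝ) * (n + q2) < γ * n - 7) :
    False := by
  set s := Real.sqrt 7 with hs
  have hs2 : s ^ 2 = 7 := Real.sq_sqrt (by norm_num)
  have hs0 : 2 < s := by nlinarith [Real.sqrt_nonneg 7]
  have hs3 : s < 3 := by nlinarith [Real.sqrt_nonneg 7]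
  have hinv : (1:ℝ)/s = s/7 := by field_simp; nlinarith
  have hn0 : (0:ℝ) ≤ n := Nat.cast_nonneg n
  have hδ0 : 0 ≤ δ := by rw [hδ]; positivity
  have hmu : (⌊δ * n⌋₊ : ℝ) ≤ δ * n := Nat.floor_le (by positivity)
  have hml : δ * n - 1 < (⌊δ * n⌋₊ : ℝ) := Nat.sub_one_lt_floor _
  have hq3 : (F1':ℝ) = q := by exact_mod_cast h4
  have hq5 : (q:ℝ) ≤ q1 + q2 := by exact_mod_cast h5
  have hq6 : (F1':ℝ) ≤ F2' := by exact_mod_cast h3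
  subst hδ hγ; simp only [hinv] at h6 h7 h8 h9 h10 hmu hml
  have p1 : (0:ℝ) ≤ F1 := Nat.cast_nonneg _
  have p2 : (0:ℝ) ≤ F2 := Nat.cast_nonneg _
  have p3 : (0:ℝ) ≤ F2' := Nat.cast_nonneg _
  have p4 : (0:ℝ) ≤ q := Nat.cast_nonneg _
  have p5 : (0:ℝ) ≤ q1 := Nat.cast_nonneg _
  have p6 : (0:ℝ) ≤ q2 := Nat.cast_nonneg _
  have key : s ^ 2 * (n:ℝ) = 7 * n := by rw [hs2]
  linarith [key]
end
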